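/- If D = 1, then for every real α ∈ (0,∞) with α ≠ 1 the minimum of the Rényi divergence D_α(p‖U) over all feasible distributions p for the symmetric TSC scheme equals (K−1)·log N; the same value (K−1)·log N is the minimum of the Kullback–Leibler divergence Σ_m p_m log(N^K p_m) and of log(N^K · max_m p_m) over feasible distributions. -/

import Mathlib

open Finset Real

/-- Download cost of option `m` (0-indexed: options `1,…,N` of the paper are `m < N`)
in the symmetric TSC scheme with `N` databases and `K` messages. -/
noncomputable def tscCost (N m : ℕ) : ℝ := if m < N then (N : ℝ) - 1 else (N : ℝ)

/-- `p` is a feasible query distribution for the symmetric TSC scheme with expected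
normalized download cost `D`. -/
def TSCFeasible (N K : ℕ) (D : ℝ) (p : ℕ → ℝ) : Prop :=
  (∀ m ∈ Finset.range (N ^ K), 0 ≤ p m) ∧
  (∑ m ∈ Finset.range (N ^ K), p m = 1) ∧
  (1 / ((N : ℝ) - 1)) * (∑ m ∈ Finset.range (N ^ K), p m * tscCost N m) = D

/-- The optimal distribution `p*` for the symmetric TSC scheme. -/
noncomputable def tscOpt (N K : ℕ) (D : ℝ) (m : ℕ) : ℝ :=
  if m < N then (1 - ((N : ℝ) - 1) * (D - 1)) / N
  else ((N : ℝ) - 1) * (D - 1) / ((N : ℝ) ^ K - (N : ℝ))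

/-- Download cost of option `m` (0-indexed) in the alternative PIR scheme with
message length `L`. -/
noncomputable def altCost (N L m : ℕ) : ℝ := if m < N then (L : ℝ) else (L : ℝ) + 1

/-- `p` is a feasible query distribution for the alternative PIR scheme
(`M = N (L+1)^(K-1)` options) with expected normalized download cost `D`. -/
def AltFeasible (N K L : ℕ) (D : ℝ) (p : ℕ → ℝ) : Prop :=
  (∀ m ∈ Finset.range (N * (L + 1) ^ (K - 1)), 0 ≤ p m) ∧
  (∑ m ∈ Finset.range (N * (L + 1) ^ (K - 1)), p m = 1) ∧
  (1 / (L : ℝ)) * (∑ m ∈ Finset.range (N * (L + 1) ^ (K - 1)), p m * altCost N L m) = D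

/-- The optimal distribution `q*` for the alternative PIR scheme. -/
noncomputable def altOpt (N K L : ℕ) (D : ℝ) (m : ℕ) : ℝ :=
  if m < N then (1 - (L : ℝ) * (D - 1)) / N
  else (L : ℝ) * (D - 1) / ((N : ℝ) * ((L : ℝ) + 1) ^ (K - 1) - (N : ℝ))

/-- Rényi divergence of order `α` (`0 < α`, `α ≠ 1`) of a distribution `p` on `M`
options from the uniform distribution on those options (natural logarithm). -/
noncomputable def renyiDiv (M : ℕ) (α : ℝ) (p : ℕ → ℝ) : ℝ :=
  (1 / (α - 1)) * Real.log ((M : ℝ) ^ (α - 1) * ∑ m ∈ Finset.range M, p m ^ α)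

/-- Kullback–Leibler divergence of a distribution `p` on `M` options from the uniform
distribution on those options (natural logarithm, with `0 · log 0 = 0`). -/
noncomputable def klDivUnif (M : ℕ) (p : ℕ → ℝ) : ℝ :=
  ∑ m ∈ Finset.range M, p m * Real.log ((M : ℝ) * p m)

/-- The maximum of `p` over the `M` options. -/
noncomputable def maxOver (M : ℕ) (hM : M ≠ 0) (p : ℕ → ℝ) : ℝ :=
  (Finset.range M).sup' (Finset.nonempty_range_iff.mpr hM) p


/-!
At cost `1` a feasible `p` lives on the `N` options of cost `N - 1`. For such `p`, each of the
three quantities is `log (N ^ K) - log N = (K - 1) log N` plus the same quantity for `p` seen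
as a distribution on `N` options; the latter is nonnegative (by Jensen's inequality for the
divergences, by pigeonhole for the maximum) and vanishes at the uniform distribution.
-/

def IsProbVec (n : ℕ) (p : ℕ → ℝ) : Prop :=
  (∀ m ∈ range n, 0 ≤ p m) ∧ ∑ m ∈ range n, p m = 1

noncomputable def uniformVec (n m : ℕ) : ℝ := if m < n then (n : ℝ)⁻¹ else 0

lemma sum_range_eq_of_eq_zero_on_Ico {f : ℕ → ℝ} {n M : ℕ} (hnM : n ≤ M)
    (hf : ∀ m ∈ Ico n M, f m = 0) :
    ∑ m ∈ range M, f m = ∑ m ∈ range n, f m := by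
  rw [← sum_range_add_sum_Ico f hnM, sum_eq_zero hf, add_zero]

namespace IsProbVec

variable {n : ℕ} {p : ℕ → ℝ}

lemma ne_zero (hp : IsProbVec n p) : n ≠ 0 := by
  rintro rfl
  simpa using hp.2

lemma exists_inv_le (hp : IsProbVec n p) : ∃ m ∈ range n, (n : ℝ)⁻¹ ≤ p m := by
  refine exists_le_of_sum_le (nonempty_range_iff.2 hp.ne_zero) ?_
  simp [hp.2, hp.ne_zero]

lemma sum_rpow_pos (hp : IsProbVec n p) (α : ℝ) : 0 < ∑ m ∈ range n, p m ^ α := by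
  obtain ⟨m, hm, hpm⟩ := hp.exists_inv_le
  have hn : (0 : ℝ) < n := Nat.cast_pos.2 (Nat.pos_of_ne_zero hp.ne_zero)
  exact sum_pos' (fun i hi => rpow_nonneg (hp.1 i hi) α)
    ⟨m, hm, rpow_pos_of_pos ((inv_pos.2 hn).trans_le hpm) α⟩

/-- Jensen's inequality at the points `n * p m`, whose uniform average is `1`. -/
lemma map_one_le_mean {f : ℝ → ℝ} (hp : IsProbVec n p) (hf : ConvexOn ℝ (Set.Ici 0) f) :
    f 1 ≤ ∑ m ∈ range n, (n : ℝ)⁻¹ * f (n * p m) := by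
  have hn : (n : ℝ) ≠ 0 := Nat.cast_ne_zero.2 hp.ne_zero
  have hw : ∑ _m ∈ range n, (n : ℝ)⁻¹ = 1 := by simp [hp.ne_zero]
  have hmean : ∑ m ∈ range n, (n : ℝ)⁻¹ * (n * p m) = 1 := by
    simp_rw [inv_mul_cancel_left₀ hn, hp.2]
  simpa only [smul_eq_mul, hmean] using
    hf.map_sum_le (t := range n) (w := fun _ => (n : ℝ)⁻¹) (p := fun m => n * p m)
      (fun _ _ => by positivity) hw
      (fun m hm => Set.mem_Ici.2 (mul_nonneg n.cast_nonneg (hp.1 m hm)))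

lemma mean_le_map_one {f : ℝ → ℝ} (hp : IsProbVec n p) (hf : ConcaveOn ℝ (Set.Ici 0) f) :
    ∑ m ∈ range n, (n : ℝ)⁻¹ * f (n * p m) ≤ f 1 := by
  simpa only [neg_le_neg_iff, Pi.neg_apply, mul_neg, sum_neg_distrib] using
    hp.map_one_le_mean hf.neg

lemma sum_inv_mul_mul_rpow (hp : IsProbVec n p) (α : ℝ) :
    ∑ m ∈ range n, (n : ℝ)⁻¹ * (n * p m) ^ α = (n : ℝ) ^ (α - 1) * ∑ m ∈ range n, p m ^ α := by
  have hn : (n : ℝ) ≠ 0 := Nat.cast_ne_zero.2 hp.ne_zero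
  rw [rpow_sub_one hn, div_eq_inv_mul, mul_assoc, mul_sum, mul_sum]
  refine sum_congr rfl fun m hm => ?_
  rw [mul_rpow n.cast_nonneg (hp.1 m hm)]

lemma renyiDiv_nonneg (hp : IsProbVec n p) {α : ℝ} (hα : 0 < α) (hα1 : α ≠ 1) :
    0 ≤ renyiDiv n α p := by
  have hS := hp.sum_rpow_pos α
  rcases hα1.lt_or_gt with hlt | hgt
  · have key := hp.mean_le_map_one (concaveOn_rpow hα.le hlt.le)
    beta_reduce at key
    rw [hp.sum_inv_mul_mul_rpow, one_rpow] at key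
    exact mul_nonneg_of_nonpos_of_nonpos (one_div_nonpos.2 (by linarith))
      (log_nonpos (by positivity) key)
  · have key := hp.map_one_le_mean (convexOn_rpow hgt.le)
    beta_reduce at key
    rw [hp.sum_inv_mul_mul_rpow, one_rpow] at key
    exact mul_nonneg (one_div_nonneg.2 (by linarith)) (log_nonneg key)

lemma klDivUnif_nonneg (hp : IsProbVec n p) : 0 ≤ klDivUnif n p := by
  have hn : (n : ℝ) ≠ 0 := Nat.cast_ne_zero.2 hp.ne_zero
  unfold klDivUnif
  simpa only [log_one, mul_zero, ← mul_assoc, inv_mul_cancel_left₀ hn] using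
    hp.map_one_le_mean convexOn_mul_log

lemma inv_le_maxOver (hp : IsProbVec n p) {M : ℕ} (hnM : n ≤ M) (hM : M ≠ 0) :
    (n : ℝ)⁻¹ ≤ maxOver M hM p := by
  obtain ⟨m, hm, hpm⟩ := hp.exists_inv_le
  exact hpm.trans (le_sup' p (mem_range.2 ((mem_range.1 hm).trans_le hnM)))

end IsProbVec

section Padding

variable {n M : ℕ} {p : ℕ → ℝ}

lemma renyiDiv_eq_of_eq_zero_on_Ico (hp : IsProbVec n p) (hnM : n ≤ M)
    (hz : ∀ m ∈ Ico n M, p m = 0) {α : ℝ} (hα0 : α ≠ 0) (hα1 : α ≠ 1) :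
    renyiDiv M α p = log M - log n + renyiDiv n α p := by
  have hS := hp.sum_rpow_pos α
  have hn : (0 : ℝ) < n := Nat.cast_pos.2 (Nat.pos_of_ne_zero hp.ne_zero)
  have hM : (0 : ℝ) < M := hn.trans_le (Nat.cast_le.2 hnM)
  have hα1' : α - 1 ≠ 0 := sub_ne_zero.2 hα1
  unfold renyiDiv
  rw [sum_range_eq_of_eq_zero_on_Ico hnM (fun m hm => by rw [hz m hm, zero_rpow hα0]),
    log_mul (rpow_pos_of_pos hM _).ne' hS.ne', log_mul (rpow_pos_of_pos hn _).ne' hS.ne',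
    log_rpow hM, log_rpow hn]
  field_simp
  ring

lemma klDivUnif_eq_of_eq_zero_on_Ico (hp : IsProbVec n p) (hnM : n ≤ M)
    (hz : ∀ m ∈ Ico n M, p m = 0) :
    klDivUnif M p = log M - log n + klDivUnif n p := by
  have hn : (n : ℝ) ≠ 0 := Nat.cast_ne_zero.2 hp.ne_zero
  have hM : (M : ℝ) ≠ 0 := Nat.cast_ne_zero.2 (by have := hp.ne_zero; omega)
  have hsplit : ∀ m, p m * log (M * p m) = p m * (log M - log n) + p m * log (n * p m) := by
    intro m
    rcases eq_or_ne (p m) 0 with h | h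
    · simp [h]
    · rw [log_mul hM h, log_mul hn h]
      ring
  unfold klDivUnif
  rw [sum_range_eq_of_eq_zero_on_Ico hnM (fun m hm => by rw [hz m hm, zero_mul]),
    sum_congr rfl fun m _ => hsplit m, sum_add_distrib, ← sum_mul, hp.2, one_mul]

end Padding

section Uniform

variable {n : ℕ}

lemma isProbVec_uniformVec (hn : n ≠ 0) : IsProbVec n (uniformVec n) := by
  refine ⟨fun _ _ => ?_, ?_⟩
  · unfold uniformVec
    split_ifs <;> positivity
  · rw [sum_congr rfl fun m hm => by rw [uniformVec, if_pos (mem_range.1 hm)]]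
    simp [hn]

lemma uniformVec_eq_zero_on_Ico (M : ℕ) : ∀ m ∈ Ico n M, uniformVec n m = 0 :=
  fun _ hm => if_neg (not_lt.2 (mem_Ico.1 hm).1)

lemma renyiDiv_uniformVec (hn : n ≠ 0) (α : ℝ) : renyiDiv n α (uniformVec n) = 0 := by
  have hn' : (0 : ℝ) < n := Nat.cast_pos.2 (Nat.pos_of_ne_zero hn)
  unfold renyiDiv
  rw [sum_congr rfl fun m hm => by rw [uniformVec, if_pos (mem_range.1 hm)]]
  have hone : (n : ℝ) ^ (α - 1) * (n * (n : ℝ)⁻¹ ^ α) = 1 := by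
    rw [inv_rpow hn'.le, rpow_sub_one hn'.ne']
    field_simp
  rw [sum_const, card_range, nsmul_eq_mul, hone, log_one, mul_zero]

lemma klDivUnif_uniformVec : klDivUnif n (uniformVec n) = 0 := by
  refine sum_eq_zero fun m hm => ?_
  have hn : (n : ℝ) ≠ 0 := Nat.cast_ne_zero.2 (by have := mem_range.1 hm; omega)
  rw [uniformVec, if_pos (mem_range.1 hm), mul_inv_cancel₀ hn, log_one, mul_zero]

lemma maxOver_uniformVec {M : ℕ} (hn : n ≠ 0) (hM : M ≠ 0) :
    maxOver M hM (uniformVec n) = (n : ℝ)⁻¹ := by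
  refine le_antisymm (sup'_le _ _ fun m _ => ?_) ?_
  · unfold uniformVec
    split_ifs
    · rfl
    · positivity
  · refine le_sup'_of_le _ (mem_range.2 (Nat.pos_of_ne_zero hM)) ?_
    rw [uniformVec, if_pos (Nat.pos_of_ne_zero hn)]

end Uniform

/-- Every cost is at least `N - 1`, so normalized cost `1` leaves no mass on the options of
cost `N`. -/
lemma tscFeasible_one_iff {N K : ℕ} (hN : 2 ≤ N) (hK : K ≠ 0) {p : ℕ → ℝ} :
    TSCFeasible N K 1 p ↔ IsProbVec N p ∧ ∀ m ∈ Ico N (N ^ K), p m = 0 := by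
  have hNM : N ≤ N ^ K := Nat.le_self_pow hK N
  have hN1 : (N : ℝ) - 1 ≠ 0 := by
    have : (2 : ℝ) ≤ N := by exact_mod_cast hN
    linarith
  have hcost : ∑ m ∈ range (N ^ K), p m * tscCost N m
      = (N - 1) * ∑ m ∈ range N, p m + N * ∑ m ∈ Ico N (N ^ K), p m := by
    rw [← sum_range_add_sum_Ico _ hNM, mul_sum, mul_sum]
    congr 1 <;> refine sum_congr rfl fun m hm => ?_
    · rw [tscCost, if_pos (mem_range.1 hm), mul_comm]
    · rw [tscCost, if_neg (not_lt.2 (mem_Ico.1 hm).1), mul_comm]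
  unfold TSCFeasible IsProbVec
  rw [hcost, ← sum_range_add_sum_Ico _ hNM]
  constructor
  · rintro ⟨hnonneg, hsum, hmean⟩
    have hrest : ∑ m ∈ Ico N (N ^ K), p m = 0 := by
      field_simp at hmean
      linear_combination hmean - ((N : ℝ) - 1) * hsum
    refine ⟨⟨fun m hm => hnonneg m (mem_range.2 ((mem_range.1 hm).trans_le hNM)), by linarith⟩,
      (sum_eq_zero_iff_of_nonneg fun m hm => hnonneg m (mem_range.2 (mem_Ico.1 hm).2)).1 hrest⟩
  · rintro ⟨⟨hnonneg, hsum⟩, hzero⟩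
    have hrest := sum_eq_zero hzero
    refine ⟨fun m hm => ?_, by rw [hsum, hrest, add_zero], by rw [hsum, hrest, mul_zero, add_zero, mul_one, one_div_mul_cancel hN1]⟩
    rcases lt_or_ge m N with hmN | hmN
    · exact hnonneg m (mem_range.2 hmN)
    · exact (hzero m (mem_Ico.2 ⟨hmN, mem_range.1 hm⟩)).ge

/-- at download cost `D = 1`, for every order `α ∈ (0,∞)`, `α ≠ 1`, the
minimum of the Rényi divergence over feasible distributions of the symmetric TSC scheme
equals `(K-1) log N`; the same value is the minimum of the KL divergence and of
`log (N^K · max_m pₘ)`. -/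
theorem tsc_full_leakage (N K : ℕ) (hN : 2 ≤ N) (hK : 2 ≤ K) :
    (∀ α : ℝ, 0 < α → α ≠ 1 →
      IsLeast {v : ℝ | ∃ p : ℕ → ℝ, TSCFeasible N K 1 p ∧ v = renyiDiv (N ^ K) α p}
        (((K : ℝ) - 1) * Real.log N)) ∧
    IsLeast {v : ℝ | ∃ p : ℕ → ℝ, TSCFeasible N K 1 p ∧ v = klDivUnif (N ^ K) p}
      (((K : ℝ) - 1) * Real.log N) ∧
    IsLeast {v : ℝ | ∃ p : ℕ → ℝ, TSCFeasible N K 1 p ∧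
        v = Real.log ((N : ℝ) ^ K *
          maxOver (N ^ K) (pow_ne_zero K (show N ≠ 0 by omega)) p)}
      (((K : ℝ) - 1) * Real.log N) := by
  have hK0 : K ≠ 0 := by omega
  have hN0 : N ≠ 0 := by omega
  have hNM : N ≤ N ^ K := Nat.le_self_pow hK0 N
  have hgap : log ((N ^ K : ℕ) : ℝ) - log N = ((K : ℝ) - 1) * log N := by
    rw [Nat.cast_pow, log_pow]
    ring
  have hgap' : log ((N : ℝ) ^ K * (N : ℝ)⁻¹) = ((K : ℝ) - 1) * log N := by
    rw [log_mul (by positivity) (by positivity), log_inv, ← Nat.cast_pow, ← sub_eq_add_neg, hgap]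
  have hunif := isProbVec_uniformVec hN0
  have hunif_zero := uniformVec_eq_zero_on_Ico (n := N) (N ^ K)
  have hfeas := (tscFeasible_one_iff hN hK0).2 ⟨hunif, hunif_zero⟩
  refine ⟨fun α hα hα1 => ⟨⟨uniformVec N, hfeas, ?_⟩, ?_⟩, ⟨⟨uniformVec N, hfeas, ?_⟩, ?_⟩,
    ⟨uniformVec N, hfeas, ?_⟩, ?_⟩
  · rw [renyiDiv_eq_of_eq_zero_on_Ico hunif hNM hunif_zero hα.ne' hα1, renyiDiv_uniformVec hN0,
      hgap, add_zero]
  · rintro _ ⟨p, hp, rfl⟩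
    obtain ⟨hpN, hpzero⟩ := (tscFeasible_one_iff hN hK0).1 hp
    rw [renyiDiv_eq_of_eq_zero_on_Ico hpN hNM hpzero hα.ne' hα1, hgap]
    linarith [hpN.renyiDiv_nonneg hα hα1]
  · rw [klDivUnif_eq_of_eq_zero_on_Ico hunif hNM hunif_zero, klDivUnif_uniformVec, hgap, add_zero]
  · rintro _ ⟨p, hp, rfl⟩
    obtain ⟨hpN, hpzero⟩ := (tscFeasible_one_iff hN hK0).1 hp
    rw [klDivUnif_eq_of_eq_zero_on_Ico hpN hNM hpzero, hgap]
    linarith [hpN.klDivUnif_nonneg]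
  · rw [maxOver_uniformVec hN0, hgap']
  · rintro _ ⟨p, hp, rfl⟩
    rw [← hgap']
    exact log_le_log (by positivity) (mul_le_mul_of_nonneg_left
      (((tscFeasible_one_iff hN hK0).1 hp).1.inv_le_maxOver hNM _) (by positivity))
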